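/- arXiv:1005.1717 — 6 statements merged into one kernel-verified Lean document; each statement's English description precedes it below -/
import Mathlib

section
/- The type I degree one move preserves transition counts: let ω = (s_1,…,s_T) be a path with s_{t_0} = s_{t_1} = s_{t_2} = i for 1 ≤ t_0 < t_1 < t_2 ≤ T, and let ω' = (s_1,…,s_{t_0−1}, s_{t_1},…,s_{t_2−1}, s_{t_0},…,s_{t_1}, s_{t_2+1},…,s_T) be the path obtained by swapping the two subpath blocks between the occurrences of i. Then ω' is a path of length T with the same number of transitions from j to k as ω for every pair (j,k), and the same initial and final states as ω. -/
/-- Number of transitions from state `i` to state `j` in the path `ω = (s₁,…,s_T)`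
(indexed `0,…,T-1`). -/
def transCount {S : Type} [DecidableEq S] {T : ℕ} (ω : Fin T → S) (i j : S) : ℕ :=
  (Finset.univ.filter (fun t : Fin (T - 1) =>
    ω ⟨t.1, by have := t.2; omega⟩ = i ∧ ω ⟨t.1 + 1, by have := t.2; omega⟩ = j)).card

/-- Total transition count `b_{ij}(x)` of a contingency table `x`. -/
def transTotal {S : Type} [DecidableEq S] [Fintype S] {T : ℕ}
    (x : (Fin T → S) → ℕ) (i j : S) : ℕ :=
  ∑ ω : Fin T → S, x ω * transCount ω i j

/-!
Position `t` of `ω'` holds the state at position `σ t := swapBlocksIndex a b c t` of `ω`, where the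
permutation `σ` exchanges the blocks `[a, b)` and `[b, c)`. The transition `t → t + 1` of `ω'` is
then the transition `σ t → σ t + 1` of `ω`: away from the three block boundaries
`σ (t + 1) = σ t + 1`, and at a boundary both `σ (t + 1)` and `σ t + 1` lie in `{a, b, c}`, where
`ω` takes the value `i`. Since `σ` permutes the transition positions, the counts agree.
-/

def swapBlocksIndex (a b c t : ℕ) : ℕ :=
  if t < a then t else if t < a + (c - b) then b + (t - a)
  else if t < c then t - (c - b) else t

section swapBlocksIndex

variable {a b c : ℕ}

theorem swapBlocksIndex_lt {n t : ℕ} (hc : c ≤ n) (ht : t < n) :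
    swapBlocksIndex a b c t < n := by
  unfold swapBlocksIndex; split_ifs <;> omega

theorem swapBlocksIndex_of_lt {t : ℕ} (h : t < a) : swapBlocksIndex a b c t = t := by
  simp [swapBlocksIndex, h]

theorem swapBlocksIndex_of_le (hab : a ≤ b) {t : ℕ} (h : c ≤ t) :
    swapBlocksIndex a b c t = t := by
  unfold swapBlocksIndex; split_ifs <;> omega

theorem swapBlocksIndex_left (hbc : b < c) : swapBlocksIndex a b c a = b := by
  unfold swapBlocksIndex; split_ifs <;> omega

theorem swapBlocksIndex_injective (hab : a ≤ b) (hbc : b ≤ c) :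
    Function.Injective (swapBlocksIndex a b c) := by
  intro s t; unfold swapBlocksIndex; split_ifs <;> omega

theorem swapBlocksIndex_succ (hab : a ≤ b) (hbc : b ≤ c) (t : ℕ) :
    swapBlocksIndex a b c (t + 1) = swapBlocksIndex a b c t + 1 ∨
      (swapBlocksIndex a b c (t + 1) ∈ ({a, b, c} : Finset ℕ) ∧
        swapBlocksIndex a b c t + 1 ∈ ({a, b, c} : Finset ℕ)) := by
  simp only [Finset.mem_insert, Finset.mem_singleton]
  unfold swapBlocksIndex; split_ifs <;> omega

end swapBlocksIndex

def swapBlocks {S : Type} {T : ℕ} (ω : Fin T → S) (a b c : ℕ) (hc : c ≤ T) : Fin T → S :=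
  fun t => ω ⟨swapBlocksIndex a b c t, swapBlocksIndex_lt hc t.2⟩

theorem transCount_eq_of_equiv {S : Type} [DecidableEq S] {T : ℕ} (ω ω' : Fin T → S)
    (e : Fin (T - 1) ≃ Fin (T - 1))
    (he : ∀ t : Fin (T - 1), ω' ⟨t, by omega⟩ = ω ⟨e t, by omega⟩ ∧
      ω' ⟨t + 1, by omega⟩ = ω ⟨e t + 1, by omega⟩)
    (j k : S) : transCount ω' j k = transCount ω j k := by
  refine Finset.card_equiv e fun t => ?_
  simp only [Finset.mem_filter, Finset.mem_univ, true_and, (he t).1, (he t).2]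

theorem transCount_swapBlocks {S : Type} [DecidableEq S] {T : ℕ} (ω : Fin T → S) {a b c : ℕ}
    (hab : a < b) (hbc : b < c) (hc : c < T) {i : S} (ha : ω ⟨a, by omega⟩ = i)
    (hb : ω ⟨b, by omega⟩ = i) (hcc : ω ⟨c, hc⟩ = i) (j k : S) :
    transCount (swapBlocks ω a b c hc.le) j k = transCount ω j k := by
  have hi : ∀ x (hx : x < T), x ∈ ({a, b, c} : Finset ℕ) → ω ⟨x, hx⟩ = i := by
    simp only [Finset.mem_insert, Finset.mem_singleton]
    rintro x hx (rfl | rfl | rfl) <;> assumption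
  have hσ : Function.Bijective fun t : Fin (T - 1) =>
      (⟨swapBlocksIndex a b c t, swapBlocksIndex_lt (by omega) t.2⟩ : Fin (T - 1)) :=
    Finite.injective_iff_bijective.mp fun s t h =>
      Fin.ext (swapBlocksIndex_injective hab.le hbc.le (Fin.mk.inj_iff.mp h))
  refine transCount_eq_of_equiv ω (swapBlocks ω a b c hc.le) (Equiv.ofBijective _ hσ)
    (fun t => ⟨rfl, ?_⟩) j k
  rcases swapBlocksIndex_succ hab.le hbc.le t with h | ⟨h₁, h₂⟩
  · simp only [swapBlocks, Equiv.ofBijective_apply, h]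
  · exact (hi _ _ h₁).trans (hi _ _ h₂).symm

/-- the type I degree one move (swapping the two blocks between
three occurrences of the state `i`, at 0-indexed positions `a < b < c`)
preserves all transition counts and the initial and final states. -/
theorem stmt5 {S : Type} [DecidableEq S] {T : ℕ}
    (ω : Fin T → S) (a b c : ℕ) (hab : a < b) (hbc : b < c) (hc : c ≤ T - 1)
    (i : S)
    (ha : ω ⟨a, by omega⟩ = i) (hb : ω ⟨b, by omega⟩ = i)
    (hcc : ω ⟨c, by omega⟩ = i)
    (ω' : Fin T → S)
    (hω' : ∀ m : Fin T,
      ω' m = if h1 : (m : ℕ) < a then ω m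
        else if h2 : (m : ℕ) < a + (c - b)
          then ω ⟨b + ((m : ℕ) - a), by have := m.2; omega⟩
        else if h3 : (m : ℕ) ≤ c
          then ω ⟨(m : ℕ) - (c - b), by have := m.2; omega⟩
        else ω m) :
    (∀ j k : S, transCount ω' j k = transCount ω j k) ∧
    ω' ⟨0, by omega⟩ = ω ⟨0, by omega⟩ ∧
    ω' ⟨T - 1, by omega⟩ = ω ⟨T - 1, by omega⟩ := by
  have hswap : ω' = swapBlocks ω a b c (by omega) := by
    funext ⟨t, ht⟩
    rw [hω']
    dsimp only [swapBlocks]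
    unfold swapBlocksIndex
    -- at `t = c` the formula for `ω'` reads position `b`, which holds `i` like position `c`
    split_ifs <;> first
      | rfl
      | (congr 1; ext; simp only; omega)
      | (obtain rfl : t = c := by omega
         calc _ = ω ⟨b, by omega⟩ := by congr 1; ext; simp only; omega
           _ = _ := hb.trans hcc.symm)
  subst hswap
  refine ⟨transCount_swapBlocks ω hab hbc (by omega) ha hb hcc, ?_, ?_⟩
  · rcases Nat.eq_zero_or_pos a with rfl | ha₀
    · simp only [swapBlocks, swapBlocksIndex_left hbc, hb, ha]
    · simp only [swapBlocks, swapBlocksIndex_of_lt ha₀]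
  · simp only [swapBlocks, swapBlocksIndex_of_le hab.le hc]
end

section
/- If a contingency table x of paths of length T over {1,2} satisfies b_{12}(x) = 0 and b_{21}(x) = 0, then every path ω with x(ω) > 0 is a flat path (constant), and x is uniquely determined within its fiber: any contingency table y with b_{ij}(y) = b_{ij}(x) for all i,j equals x. -/
lemma flat_of_no_cross {T : ℕ} (ω : Fin T → Fin 2)
    (h01 : transCount ω 0 1 = 0) (h10 : transCount ω 1 0 = 0) :
    ∃ c : Fin 2, ω = fun _ => c := by
  rcases Nat.eq_zero_or_pos T with rfl | hTpos
  · exact ⟨0, funext fun t => t.elim0⟩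
  rw [transCount, Finset.card_eq_zero, Finset.filter_eq_empty_iff] at h01 h10
  have step : ∀ t : Fin (T - 1),
      ω ⟨t.1, by have := t.2; omega⟩ = ω ⟨t.1 + 1, by have := t.2; omega⟩ := by
    intro t
    have h1 := h01 (Finset.mem_univ t)
    have h2 := h10 (Finset.mem_univ t)
    set a := ω ⟨t.1, by have := t.2; omega⟩
    set b := ω ⟨t.1 + 1, by have := t.2; omega⟩
    have ha := a.2; have hb := b.2
    simp only [Fin.ext_iff, Fin.val_zero, Fin.val_one, not_and] at h1 h2 ⊢
    omega
  refine ⟨ω ⟨0, hTpos⟩, funext fun t => ?_⟩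
  obtain ⟨k, hk⟩ := t
  induction k with
  | zero => rfl
  | succ n ih =>
    have hn : n < T - 1 := by omega
    have := step ⟨n, hn⟩
    simp only at this
    rw [← this]
    exact ih (by omega)

lemma transCount_const {T : ℕ} (c i j : Fin 2) :
    transCount (fun _ : Fin T => c) i j = if c = i ∧ c = j then T - 1 else 0 := by
  by_cases h : c = i ∧ c = j
  · obtain ⟨rfl, rfl⟩ := h
    simp [transCount]
  · rw [if_neg h]
    rw [transCount, Finset.card_eq_zero, Finset.filter_eq_empty_iff]
    intro _ _
    exact h

lemma total_diag {T : ℕ} (hT : 2 ≤ T) (x : (Fin T → Fin 2) → ℕ)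
    (hflat : ∀ ω : Fin T → Fin 2, 0 < x ω → ∃ c : Fin 2, ω = fun _ => c)
    (c : Fin 2) :
    transTotal x c c = x (fun _ => c) * (T - 1) := by
  rw [transTotal]
  rw [Finset.sum_eq_single (fun _ => c)]
  · rw [transCount_const]; simp
  · intro ω _ hne
    rcases Nat.eq_zero_or_pos (x ω) with h0 | hpos
    · simp [h0]
    obtain ⟨d, rfl⟩ := hflat ω hpos
    have hdc : d ≠ c := fun h => hne (by rw [h])
    rw [transCount_const]; simp [hdc]
  · intro h; exact absurd (Finset.mem_univ _) h

lemma supp_flat {T : ℕ} (x : (Fin T → Fin 2) → ℕ)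
    (hb01 : transTotal x 0 1 = 0) (hb10 : transTotal x 1 0 = 0) :
    ∀ ω : Fin T → Fin 2, 0 < x ω → ∃ c : Fin 2, ω = fun _ => c := by
  intro ω hω
  rw [transTotal, Finset.sum_eq_zero_iff] at hb01 hb10
  have h1 := hb01 ω (Finset.mem_univ ω)
  have h2 := hb10 ω (Finset.mem_univ ω)
  have h1' : transCount ω 0 1 = 0 := by
    rcases Nat.mul_eq_zero.mp h1 with h | h
    · omega
    · exact h
  have h2' : transCount ω 1 0 = 0 := by
    rcases Nat.mul_eq_zero.mp h2 with h | h
    · omega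
    · exact h
  exact flat_of_no_cross ω h1' h2'

/-- if a contingency table has no 1→2 and no 2→1 transitions,
every supported path is flat, and the table is uniquely determined within its
fiber. (State `0` is the paper's `1`, state `1` is the paper's `2`.) -/
theorem stmt11 {T : ℕ} (hT : 2 ≤ T) (x : (Fin T → Fin 2) → ℕ)
    (hb01 : transTotal x 0 1 = 0) (hb10 : transTotal x 1 0 = 0) :
    (∀ ω : Fin T → Fin 2, 0 < x ω → ∃ c : Fin 2, ω = fun _ => c) ∧
    (∀ y : (Fin T → Fin 2) → ℕ,
      (∀ i j : Fin 2, transTotal y i j = transTotal x i j) → y = x) := by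
  have hxflat := supp_flat x hb01 hb10
  refine ⟨hxflat, fun y hy => ?_⟩
  have hy01 : transTotal y 0 1 = 0 := by rw [hy 0 1]; exact hb01
  have hy10 : transTotal y 1 0 = 0 := by rw [hy 1 0]; exact hb10
  have hyflat := supp_flat y hy01 hy10
  have hT1 : 0 < T - 1 := by omega
  have hconst : ∀ c : Fin 2, y (fun _ => c) = x (fun _ => c) := by
    intro c
    have := hy c c
    rw [total_diag hT x hxflat c, total_diag hT y hyflat c] at this
    exact Nat.eq_of_mul_eq_mul_right hT1 this
  funext ω
  rcases Nat.eq_zero_or_pos (y ω) with hy0 | hypos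
  · rcases Nat.eq_zero_or_pos (x ω) with hx0 | hxpos
    · rw [hy0, hx0]
    · obtain ⟨c, rfl⟩ := hxflat ω hxpos
      exact hconst c
  · obtain ⟨c, rfl⟩ := hyflat ω hypos
    exact hconst c
end

section
/- Suppose x is a contingency table of paths of length T ≥ 2 over {1,2} with b_{21}(x) = 0 and b_{12}(x) = 1. Then x is the unique contingency table in its fiber: any table y with b_{ij}(y) = b_{ij}(x) for all i,j satisfies y = x. -/
/-!
States `0`, `1` are the paper's `1`, `2`. A path with no `1 → 0` transition is monotone, i.e. a
step path `0…01…1`, so `x` is supported on step paths. Among them only the non-constant ones have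
a `0 → 1` transition (exactly one), so `b₀₁ = 1` leaves a single non-constant path, with `a` zeros
(`0 < a < T`) and multiplicity one, next to `m` copies of `0…0` and `n` copies of `1…1`. Then
`b₀₀ = m (T - 1) + (a - 1)` with `a - 1 < T - 1`, so division by `T - 1` recovers `m` and `a`
from `b₀₀`, and `b₁₁ = n (T - 1) + (T - 1 - a)` recovers `n`: the table is a function of its
transition counts.
-/

open Finset

lemma Finset.exists_eq_one_of_sum_eq_one {α : Type*} {s : Finset α} {f : α → ℕ}
    (h : ∑ a ∈ s, f a = 1) : ∃ a ∈ s, f a = 1 ∧ ∀ b ∈ s, b ≠ a → f b = 0 := by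
  classical
  obtain ⟨a, ha, hfa⟩ := exists_ne_zero_of_sum_ne_zero (h ▸ one_ne_zero)
  rw [← add_sum_erase s f ha] at h
  refine ⟨a, ha, by omega, fun b hb hba => ?_⟩
  have := single_le_sum (fun _ _ => Nat.zero_le _) (mem_erase.2 ⟨hba, hb⟩) (f := f)
  omega

namespace Fin

lemma card_filter_le_val (n m : ℕ) : #{i : Fin n | m ≤ (i : ℕ)} = n - m := by
  have hlt : #{i : Fin n | (i : ℕ) < m} = min n m := card_filter_val_lt
  have hsplit := card_filter_add_card_filter_not (s := (univ : Finset (Fin n)))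
    (p := fun i => (i : ℕ) < m)
  simp only [not_lt, card_univ, Fintype.card_fin] at hsplit
  omega

lemma card_filter_val_add_one_eq (n m : ℕ) :
    #{i : Fin n | (i : ℕ) + 1 = m} = if 0 < m ∧ m ≤ n then 1 else 0 := by
  split_ifs with h
  · rw [card_eq_one]
    exact ⟨⟨m - 1, by omega⟩, by ext i; simp only [mem_filter, mem_univ, true_and, mem_singleton, Fin.ext_iff]; omega⟩
  · rw [card_eq_zero, filter_eq_empty_iff]
    intro i _
    omega

end Fin

section transTotal

variable {S : Type} [DecidableEq S] [Fintype S] {T : ℕ}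

lemma transTotal_add (x y : (Fin T → S) → ℕ) (i j : S) :
    transTotal (x + y) i j = transTotal x i j + transTotal y i j := by
  simp only [transTotal, Pi.add_apply, add_mul, sum_add_distrib]

lemma transTotal_single (ω : Fin T → S) (c : ℕ) (i j : S) :
    transTotal (Pi.single ω c) i j = c * transCount ω i j := by
  simp [transTotal, Pi.single_apply]

end transTotal

def stepPath (T k : ℕ) : Fin T → Fin 2 := fun t => if (t : ℕ) < k then 0 else 1

section stepPath

variable {T : ℕ}

lemma stepPath_apply_eq_zero {k : ℕ} {t : Fin T} : stepPath T k t = 0 ↔ (t : ℕ) < k := by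
  simp [stepPath]

lemma stepPath_apply_eq_one {k : ℕ} {t : Fin T} : stepPath T k t = 1 ↔ k ≤ (t : ℕ) := by
  simp [stepPath]

lemma card_stepPath_eq_zero (k : ℕ) : #{t | stepPath T k t = 0} = min T k := by
  simp only [stepPath_apply_eq_zero]
  exact Fin.card_filter_val_lt

lemma stepPath_injOn : Set.InjOn (stepPath T) (Set.Iic T) := by
  intro k hk l hl h
  have := card_stepPath_eq_zero (T := T) k
  rw [h, card_stepPath_eq_zero] at this
  simp only [Set.mem_Iic] at hk hl
  omega

lemma eq_stepPath_of_monotone {ω : Fin T → Fin 2} (hω : Monotone ω) :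
    ω = stepPath T #{t | ω t = 0} := by
  funext t
  have key : t < #{t | ω t = 0} ↔ ω t = 0 :=
    Fin.lt_card_filter_univ_iff_apply_of_imp _ fun i j hji hi => by
      simpa [hi] using hω hji
  by_cases h : ω t = 0
  · simp [stepPath, key.2 h, h]
  · simp only [stepPath, mt key.1 h, if_false]
    omega

lemma monotone_of_transCount_one_zero {ω : Fin T → Fin 2} (h : transCount ω 1 0 = 0) :
    Monotone ω := by
  obtain _ | n := T
  · exact fun a => a.elim0
  rw [Fin.monotone_iff_le_succ]
  intro i
  rw [transCount, card_eq_zero, filter_eq_empty_iff] at h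
  have hi : ¬(ω (Fin.castSucc i) = 1 ∧ ω i.succ = 0) := h (mem_univ (i : Fin (n + 1 - 1)))
  revert hi
  generalize ω (Fin.castSucc i) = a
  generalize ω i.succ = b
  decide +revert

lemma exists_eq_stepPath_of_transCount_one_zero {ω : Fin T → Fin 2}
    (h : transCount ω 1 0 = 0) : ∃ k ≤ T, ω = stepPath T k :=
  ⟨_, (card_filter_le _ _).trans (by simp),
    eq_stepPath_of_monotone (monotone_of_transCount_one_zero h)⟩

lemma transCount_stepPath_zero_zero {k : ℕ} (hk : k ≤ T) :
    transCount (stepPath T k) 0 0 = k - 1 := by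
  have h : ∀ t : Fin (T - 1), (stepPath T k ⟨t, by omega⟩ = 0 ∧
      stepPath T k ⟨t + 1, by omega⟩ = 0) ↔ (t : ℕ) < k - 1 := by
    intro t; simp only [stepPath_apply_eq_zero]; omega
  rw [transCount, filter_congr fun t _ => h t, Fin.card_filter_val_lt]
  omega

lemma transCount_stepPath_one_one (k : ℕ) :
    transCount (stepPath T k) 1 1 = T - 1 - k := by
  have h : ∀ t : Fin (T - 1), (stepPath T k ⟨t, by omega⟩ = 1 ∧
      stepPath T k ⟨t + 1, by omega⟩ = 1) ↔ k ≤ (t : ℕ) := by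
    intro t; simp only [stepPath_apply_eq_one]; omega
  rw [transCount, filter_congr fun t _ => h t, Fin.card_filter_le_val]

lemma transCount_stepPath_zero_one (k : ℕ) :
    transCount (stepPath T k) 0 1 = if 0 < k ∧ k < T then 1 else 0 := by
  have h : ∀ t : Fin (T - 1), (stepPath T k ⟨t, by omega⟩ = 0 ∧
      stepPath T k ⟨t + 1, by omega⟩ = 1) ↔ (t : ℕ) + 1 = k := by
    intro t; simp only [stepPath_apply_eq_zero, stepPath_apply_eq_one]; omega
  rw [transCount, filter_congr fun t _ => h t, Fin.card_filter_val_add_one_eq]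
  congr 1
  exact propext (by omega)

end stepPath

def stepTable (T m n a : ℕ) : (Fin T → Fin 2) → ℕ :=
  Pi.single (stepPath T T) m + Pi.single (stepPath T 0) n + Pi.single (stepPath T a) 1

section stepTable

variable {T : ℕ}

lemma transTotal_stepTable_zero_zero (m n : ℕ) {a : ℕ} (ha : a ≤ T) :
    transTotal (stepTable T m n a) 0 0 = (T - 1) * m + (a - 1) := by
  simp only [stepTable, transTotal_add, transTotal_single,
    transCount_stepPath_zero_zero le_rfl, transCount_stepPath_zero_zero (Nat.zero_le T),
    transCount_stepPath_zero_zero ha]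
  ring

lemma transTotal_stepTable_one_one (m n a : ℕ) :
    transTotal (stepTable T m n a) 1 1 = (T - 1) * n + (T - 1 - a) := by
  simp only [stepTable, transTotal_add, transTotal_single, transCount_stepPath_one_one]
  rw [show T - 1 - T = 0 by omega, Nat.sub_zero]
  ring

lemma exists_eq_stepTable {z : (Fin T → Fin 2) → ℕ}
    (h10 : transTotal z 1 0 = 0) (h01 : transTotal z 0 1 = 1) :
    ∃ m n a, 0 < a ∧ a < T ∧ z = stepTable T m n a := by
  have hstep : ∀ ω, z ω ≠ 0 → ∃ k ≤ T, ω = stepPath T k := fun ω hω =>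
    exists_eq_stepPath_of_transCount_one_zero
      ((mul_eq_zero.1 (sum_eq_zero_iff.1 h10 ω (mem_univ ω))).resolve_left hω)
  obtain ⟨ω₀, -, h₀, hothers⟩ := exists_eq_one_of_sum_eq_one h01
  obtain ⟨hz₀, hc₀⟩ := mul_eq_one.1 h₀
  obtain ⟨a, haT, rfl⟩ := hstep ω₀ (by omega)
  have ha : 0 < a ∧ a < T := by
    by_contra h
    simp [transCount_stepPath_zero_one, h] at hc₀
  have hsupp : ∀ ω, z ω ≠ 0 → ω = stepPath T T ∨ ω = stepPath T 0 ∨ ω = stepPath T a := by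
    intro ω hω
    by_cases hωa : ω = stepPath T a
    · exact .inr (.inr hωa)
    obtain ⟨k, hk, rfl⟩ := hstep ω hω
    have hk01 := hothers _ (mem_univ _) hωa
    rw [transCount_stepPath_zero_one, mul_eq_zero, or_iff_right hω, ite_eq_right_iff] at hk01
    obtain rfl | rfl : k = T ∨ k = 0 := by
      have := mt hk01 one_ne_zero
      omega
    all_goals simp
  have hne : ∀ {k l}, k ≤ T → l ≤ T → k ≠ l → stepPath T k ≠ stepPath T l :=
    fun hk hl hkl => stepPath_injOn.ne hk hl hkl
  refine ⟨z (stepPath T T), z (stepPath T 0), a, ha.1, ha.2, funext fun ω => ?_⟩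
  simp only [stepTable, Pi.add_apply, Pi.single_apply]
  by_cases hzω : z ω = 0
  · split_ifs <;> simp_all
  · rcases hsupp ω hzω with rfl | rfl | rfl
    · simp [hne le_rfl (Nat.zero_le T) (by omega), hne le_rfl haT (by omega)]
    · simp [hne (Nat.zero_le T) le_rfl (by omega), hne (Nat.zero_le T) haT (by omega)]
    · simp [hz₀, hne haT le_rfl (by omega), hne haT (Nat.zero_le T) (by omega)]

lemma eq_stepTable_transTotal {z : (Fin T → Fin 2) → ℕ}
    (h10 : transTotal z 1 0 = 0) (h01 : transTotal z 0 1 = 1) :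
    z = stepTable T (transTotal z 0 0 / (T - 1)) (transTotal z 1 1 / (T - 1))
      (transTotal z 0 0 % (T - 1) + 1) := by
  obtain ⟨m, n, a, ha₀, haT, rfl⟩ := exists_eq_stepTable h10 h01
  rw [transTotal_stepTable_zero_zero _ _ haT.le, transTotal_stepTable_one_one,
    Nat.mul_add_div (by omega), Nat.mul_add_div (by omega), Nat.mul_add_mod,
    Nat.mod_eq_of_lt (by omega), Nat.div_eq_of_lt (by omega), Nat.div_eq_of_lt (by omega),
    add_zero, add_zero, Nat.sub_add_cancel ha₀]

end stepTable

theorem stmt12_general {T : ℕ} (x : (Fin T → Fin 2) → ℕ)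
    (hb10 : transTotal x 1 0 = 0) (hb01 : transTotal x 0 1 = 1)
    (y : (Fin T → Fin 2) → ℕ)
    (hy : ∀ i j : Fin 2, transTotal y i j = transTotal x i j) :
    y = x := by
  rw [eq_stepTable_transTotal ((hy 1 0).trans hb10) ((hy 0 1).trans hb01), hy 0 0, hy 1 1]
  exact (eq_stepTable_transTotal hb10 hb01).symm

/-- a contingency table with `b₂₁ = 0` and `b₁₂ = 1` is the
unique table in its fiber. (State `0` is the paper's `1`, state `1` is the
paper's `2`.) -/
theorem stmt12 {T : ℕ} (hT : 2 ≤ T) (x : (Fin T → Fin 2) → ℕ)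
    (hb10 : transTotal x 1 0 = 0) (hb01 : transTotal x 0 1 = 1)
    (y : (Fin T → Fin 2) → ℕ)
    (hy : ∀ i j : Fin 2, transTotal y i j = transTotal x i j) :
    y = x :=
  stmt12_general x hb10 hb01 y hy
end

section
/- Let x be a contingency table of paths of length T over {1,2} with b_{21}(x) = 0, let f_1 be the number of flat paths at 1 (i.e., f_1 = x(11…1)) and f_2 = x(22…2). Then b_{11}(x) − f_1(T−1) is the total number of 1→1 transitions in the single-step paths of x; in particular b_{11}(x) − f_1(T−1) = Σ_{t=1}^{T−1} (t−1) m_t and b_{22}(x) − f_2(T−1) = Σ_{t=1}^{T−1} (T−t−1) m_t, where m_t is the number of single-step paths from 1 to 2 at time t in x, and Σ_t m_t = b_{12}(x). -/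
def sp (T t : ℕ) : Fin T → Fin 2 := fun k => if (k : ℕ) < t then 0 else 1

lemma ite01_eq_zero (c : Prop) [Decidable c] : ((if c then (0:Fin 2) else 1) = 0) ↔ c := by
  split <;> simp_all

lemma ite01_eq_one (c : Prop) [Decidable c] : ((if c then (0:Fin 2) else 1) = 1) ↔ ¬c := by
  split <;> simp_all

lemma card_aux {n : ℕ} (r : ℕ → Prop) [DecidablePred r] :
    (Finset.univ.filter (fun k : Fin n => r k.1)).card
      = ((Finset.range n).filter r).card := by
  rw [Finset.card_filter, Finset.card_filter,
    Fin.sum_univ_eq_sum_range (fun k => if r k then 1 else 0)]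

lemma tc_gen {T : ℕ} (t : ℕ) (i j : Fin 2) :
    transCount (sp T t) i j =
      ((Finset.range (T-1)).filter
        (fun k => (if k < t then (0:Fin 2) else 1) = i ∧
                  (if k + 1 < t then (0:Fin 2) else 1) = j)).card := by
  unfold transCount sp
  exact card_aux (fun k => (if k < t then (0:Fin 2) else 1) = i ∧
                  (if k + 1 < t then (0:Fin 2) else 1) = j)

lemma tc00 {T : ℕ} (t : ℕ) (ht : t ≤ T) : transCount (sp T t) 0 0 = t - 1 := by
  rw [tc_gen]
  have : ((Finset.range (T-1)).filter
      (fun k => (if k < t then (0:Fin 2) else 1) = 0 ∧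
                (if k + 1 < t then (0:Fin 2) else 1) = 0)) = Finset.range (t-1) := by
    ext k
    simp only [Finset.mem_filter, Finset.mem_range, ite01_eq_zero]
    omega
  rw [this, Finset.card_range]

lemma tc11 {T : ℕ} (t : ℕ) : transCount (sp T t) 1 1 = T - 1 - t := by
  rw [tc_gen]
  have : ((Finset.range (T-1)).filter
      (fun k => (if k < t then (0:Fin 2) else 1) = 1 ∧
                (if k + 1 < t then (0:Fin 2) else 1) = 1)) = Finset.Ico t (T-1) := by
    ext k
    simp only [Finset.mem_filter, Finset.mem_range, Finset.mem_Ico, ite01_eq_one]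
    omega
  rw [this, Nat.card_Ico]

lemma tc01 {T : ℕ} (t : ℕ) :
    transCount (sp T t) 0 1 = if 1 ≤ t ∧ t ≤ T - 1 then 1 else 0 := by
  rw [tc_gen]
  by_cases h : 1 ≤ t ∧ t ≤ T - 1
  · have : ((Finset.range (T-1)).filter
        (fun k => (if k < t then (0:Fin 2) else 1) = 0 ∧
                  (if k + 1 < t then (0:Fin 2) else 1) = 1)) = {t-1} := by
      ext k
      simp only [Finset.mem_filter, Finset.mem_range, Finset.mem_singleton,
        ite01_eq_zero, ite01_eq_one]
      omega
    rw [this, if_pos h]; rfl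
  · have : ((Finset.range (T-1)).filter
        (fun k => (if k < t then (0:Fin 2) else 1) = 0 ∧
                  (if k + 1 < t then (0:Fin 2) else 1) = 1)) = ∅ := by
      ext k
      simp only [Finset.mem_filter, Finset.mem_range,
        ite01_eq_zero, ite01_eq_one, Finset.notMem_empty, iff_false]
      omega
    rw [this, if_neg h]; rfl

lemma fin2cases (a : Fin 2) : a = 0 ∨ a = 1 := by omega

lemma classify {T : ℕ} (ω : Fin T → Fin 2) (h : transCount ω 1 0 = 0) :
    ∃ t ≤ T, ω = sp T t := by
  have hstep : ∀ (k : ℕ) (hk : k < T - 1),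
      ω ⟨k, by omega⟩ = 1 → ω ⟨k+1, by omega⟩ = 1 := by
    intro k hk h1
    have he := Finset.card_eq_zero.mp h
    have hk' := Finset.eq_empty_iff_forall_notMem.mp he ⟨k, hk⟩
    simp only [Finset.mem_filter, Finset.mem_univ, true_and, not_and] at hk'
    have := hk' h1
    rcases fin2cases (ω ⟨k+1, by omega⟩) with h0 | h0
    · exact absurd h0 this
    · exact h0
  have mono : ∀ (b : ℕ) (hb : b < T) (a : ℕ) (ha : a < T), a ≤ b →
      ω ⟨a, ha⟩ = 1 → ω ⟨b, hb⟩ = 1 := by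
    intro b
    induction b with
    | zero =>
      intro hb a ha hab h1
      have ha0 : a = 0 := Nat.le_zero.mp hab
      subst ha0
      exact h1
    | succ b ih =>
      intro hb a ha hab h1
      rcases Nat.lt_or_ge a (b+1) with hlt | hge
      · have hb' : b < T := by omega
        exact hstep b (by omega) (ih hb' a ha (by omega) h1)
      · have : a = b + 1 := by omega
        subst this; exact h1
  by_cases hone : ∃ n : ℕ, ∃ h : n < T, ω ⟨n, h⟩ = 1
  · set t := Nat.find hone with ht
    obtain ⟨htT, hωt⟩ := Nat.find_spec hone
    refine ⟨t, by omega, funext fun k => ?_⟩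
    by_cases hk : (k : ℕ) < t
    · have hnot := Nat.find_min hone hk
      simp only [not_exists] at hnot
      have h1 : ω k ≠ 1 := by
        intro hc
        exact hnot k.2 (by rw [Fin.eta]; exact hc)
      have : sp T t k = 0 := if_pos hk
      rw [this]
      rcases fin2cases (ω k) with h0 | h0
      · exact h0
      · exact absurd h0 h1
    · have : sp T t k = 1 := if_neg hk
      rw [this]
      have := mono k.1 k.2 t htT (by omega) hωt
      rwa [Fin.eta] at this
  · refine ⟨T, le_refl T, funext fun k => ?_⟩
    have : sp T T k = 0 := if_pos k.2
    rw [this]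
    simp only [not_exists] at hone
    have h1 : ω k ≠ 1 := fun hc => hone k.1 k.2 (by rw [Fin.eta]; exact hc)
    rcases fin2cases (ω k) with h0 | h0
    · exact h0
    · exact absurd h0 h1

lemma sp_inj {T : ℕ} (t₁ t₂ : ℕ) (h₁ : t₁ ≤ T) (h₂ : t₂ ≤ T)
    (h : sp T t₁ = sp T t₂) : t₁ = t₂ := by
  by_contra hne
  rcases Nat.lt_or_ge t₁ t₂ with hlt | hge
  · have hT : t₁ < T := by omega
    have := congrFun h ⟨t₁, hT⟩
    simp only [sp] at this
    rw [if_neg (by omega), if_pos (by omega)] at this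
    exact absurd this (by decide)
  · have hlt : t₂ < t₁ := by omega
    have hT : t₂ < T := by omega
    have := congrFun h ⟨t₂, hT⟩
    simp only [sp] at this
    rw [if_pos (by omega), if_neg (by omega)] at this
    exact absurd this (by decide)

lemma key {T : ℕ} (x : (Fin T → Fin 2) → ℕ) (hb : transTotal x 1 0 = 0) (i j : Fin 2) :
    transTotal x i j = ∑ t ∈ Finset.range (T+1), x (sp T t) * transCount (sp T t) i j := by
  have hx : ∀ ω, x ω ≠ 0 → transCount ω 1 0 = 0 := by
    intro ω hω
    have := (Finset.sum_eq_zero_iff.mp hb) ω (Finset.mem_univ ω)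
    rcases Nat.mul_eq_zero.mp this with h | h
    · exact absurd h hω
    · exact h
  unfold transTotal
  rw [← Finset.sum_subset (Finset.subset_univ ((Finset.range (T+1)).image (sp T)))]
  · rw [Finset.sum_image]
    intro t₁ ht₁ t₂ ht₂ h
    exact sp_inj t₁ t₂ (by simpa using Nat.lt_succ_iff.mp (Finset.mem_range.mp ht₁))
      (Nat.lt_succ_iff.mp (Finset.mem_range.mp ht₂)) h
  · intro ω _ hω
    rcases Nat.eq_zero_or_pos (x ω) with h0 | h0
    · rw [h0, Nat.zero_mul]
    · obtain ⟨t, htT, rfl⟩ := classify ω (hx ω (by omega))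
      exact absurd (Finset.mem_image.mpr ⟨t, Finset.mem_range.mpr (by omega), rfl⟩) hω

lemma range_split {T : ℕ} (hT : 2 ≤ T) :
    Finset.range (T+1) = insert 0 (insert T (Finset.Icc 1 (T-1))) := by
  ext k
  simp only [Finset.mem_range, Finset.mem_insert, Finset.mem_Icc]
  omega

lemma not0 {T : ℕ} (hT : 2 ≤ T) : 0 ∉ insert T (Finset.Icc 1 (T-1)) := by
  simp only [Finset.mem_insert, Finset.mem_Icc]; omega

lemma notT {T : ℕ} (hT : 2 ≤ T) : T ∉ Finset.Icc 1 (T-1) := by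
  simp only [Finset.mem_Icc]; omega

lemma spT {T : ℕ} : sp T T = fun _ => 0 := funext fun k => if_pos k.2

lemma sp0 {T : ℕ} : sp T 0 = fun _ => 1 := funext fun k => if_neg (by omega)

/-- if `b₂₁(x) = 0` then, with `f₁, f₂` the numbers of flat paths
at 1 and 2 and `m_t` the number of single-step paths from 1 to 2 at time `t`,
`b₁₁ = f₁(T-1) + Σ_t (t-1) m_t`, `b₂₂ = f₂(T-1) + Σ_t (T-t-1) m_t` and
`Σ_t m_t = b₁₂`.  (State `0` is the paper's `1`, state `1` is the paper's
`2`; the single-step path at time `t` has its first `t` entries equal to 0.) -/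
theorem stmt13 {T : ℕ} (hT : 2 ≤ T) (x : (Fin T → Fin 2) → ℕ)
    (hb : transTotal x 1 0 = 0) :
    transTotal x 0 0 = x (fun _ => 0) * (T - 1) +
      ∑ t ∈ Finset.Icc 1 (T - 1),
        (t - 1) * x (fun k : Fin T => if (k : ℕ) < t then 0 else 1) ∧
    transTotal x 1 1 = x (fun _ => 1) * (T - 1) +
      ∑ t ∈ Finset.Icc 1 (T - 1),
        (T - t - 1) * x (fun k : Fin T => if (k : ℕ) < t then 0 else 1) ∧
    (∑ t ∈ Finset.Icc 1 (T - 1),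
        x (fun k : Fin T => if (k : ℕ) < t then (0 : Fin 2) else 1)) =
      transTotal x 0 1 := by
  have hkey := key x hb
  refine ⟨?_, ?_, ?_⟩
  · rw [hkey 0 0, range_split hT, Finset.sum_insert (not0 hT), Finset.sum_insert (notT hT)]
    rw [tc00 0 (by omega), tc00 T (le_refl T)]
    have hc : ∀ t ∈ Finset.Icc 1 (T-1),
        x (sp T t) * transCount (sp T t) 0 0 = (t - 1) * x (sp T t) := by
      intro t ht
      rw [tc00 t (by have := Finset.mem_Icc.mp ht; omega), Nat.mul_comm]
    rw [Finset.sum_congr rfl hc, spT]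
    simp only [show (0:ℕ) - 1 = 0 from rfl, Nat.mul_zero, Nat.zero_add]
    congr 1
  · rw [hkey 1 1, range_split hT, Finset.sum_insert (not0 hT), Finset.sum_insert (notT hT)]
    rw [tc11 0, tc11 T]
    have hc : ∀ t ∈ Finset.Icc 1 (T-1),
        x (sp T t) * transCount (sp T t) 1 1 = (T - t - 1) * x (sp T t) := by
      intro t ht
      rw [tc11 t, Nat.mul_comm]
      congr 1
      omega
    rw [Finset.sum_congr rfl hc, sp0]
    have h1 : T - 1 - T = 0 := by omega
    have h2 : T - 1 - 0 = T - 1 := by omega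
    rw [h1, h2, spT]
    simp only [Nat.mul_zero, Nat.zero_add]
    congr 1
  · rw [hkey 0 1, range_split hT, Finset.sum_insert (not0 hT), Finset.sum_insert (notT hT)]
    rw [tc01 0, tc01 T, if_neg (by omega), if_neg (by omega)]
    have hc : ∀ t ∈ Finset.Icc 1 (T-1),
        x (sp T t) * transCount (sp T t) 0 1 = x (sp T t) := by
      intro t ht
      rw [tc01 t, if_pos (Finset.mem_Icc.mp ht), Nat.mul_one]
    rw [Finset.sum_congr rfl hc]
    simp only [Nat.mul_zero, Nat.zero_add]
    congr 1
end

section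
/- The 2 by 2 swap preserves transition counts: let t_0 ≠ t_1 with 1 ≤ t_0, t_1 ≤ T−1, and let ω_1, ω_2, ω_3, ω_4 be paths over {1,2} with (ω_1)_{t_0} = (ω_1)_{t_0+1} = 1, (ω_2)_{t_0} = (ω_2)_{t_0+1} = 2, (ω_3)_{t_1} = 1, (ω_3)_{t_1+1} = 2, (ω_4)_{t_1} = 2, (ω_4)_{t_1+1} = 1. Define ω̃_1 = (ω_1 up to t_0, then 1,2, then ω_2 after t_0+1), ω̃_2 = (ω_2 up to t_0, then 2,1, then ω_1 after t_0+1), ω̃_3 = (ω_3 up to t_1, then 1,1, then ω_4 after t_1+1), ω̃_4 = (ω_4 up to t_1, then 2,2, then ω_3 after t_1+1). Then the multiset {ω̃_1, ω̃_2, ω̃_3, ω̃_4} has the same total number of i→j transitions as {ω_1, ω_2, ω_3, ω_4} for every (i,j) ∈ {1,2}², and the same multisets of initial and final states. -/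
/-- Indicator of an `i → j` transition at position `t`. -/
def ind {T : ℕ} (ω : Fin T → Fin 2) (i j : Fin 2) (t : Fin (T - 1)) : ℕ :=
  if ω ⟨t.1, by have := t.2; omega⟩ = i ∧ ω ⟨t.1 + 1, by have := t.2; omega⟩ = j then 1 else 0

lemma transCount_eq_sum {T : ℕ} (ω : Fin T → Fin 2) (i j : Fin 2) :
    transCount ω i j = ∑ t : Fin (T - 1), ind ω i j t := by
  rw [transCount, Finset.card_filter]
  rfl

lemma pair_ind {T : ℕ} (q : ℕ) (a b τa τb : Fin T → Fin 2)
    (hτa : ∀ m : Fin T, τa m = if (m : ℕ) ≤ q then a m else b m)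
    (hτb : ∀ m : Fin T, τb m = if (m : ℕ) ≤ q then b m else a m)
    (i j : Fin 2) (t : Fin (T - 1)) (ht : (t : ℕ) ≠ q) :
    ind τa i j t + ind τb i j t = ind a i j t + ind b i j t := by
  unfold ind
  rcases lt_or_gt_of_ne ht with h | h
  · have h1 : t.1 ≤ q := h.le
    have h2 : t.1 + 1 ≤ q := h
    simp [hτa, hτb, h1, h2]
  · have h1 : ¬ t.1 ≤ q := by omega
    have h2 : ¬ t.1 + 1 ≤ q := by omega
    simp [hτa, hτb, h1, h2]
    ring

lemma ind_at {T : ℕ} (q : ℕ) (hq : q + 1 ≤ T - 1) (a b τa : Fin T → Fin 2)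
    (hτa : ∀ m : Fin T, τa m = if (m : ℕ) ≤ q then a m else b m)
    (i j : Fin 2) :
    ind τa i j ⟨q, by omega⟩ =
      if a ⟨q, by omega⟩ = i ∧ b ⟨q + 1, by omega⟩ = j then 1 else 0 := by
  unfold ind
  rw [hτa, hτa, if_pos (show q ≤ q from le_refl q), if_neg (show ¬ q + 1 ≤ q by omega)]

/-- the 2 by 2 swap preserves transition counts and the multisets
of initial and final states.  State `0` is the paper's `1` and state `1` is
the paper's `2`; `q₀ = t₀ - 1` and `q₁ = t₁ - 1` are the 0-indexed positions
of the swapped transitions. -/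
theorem stmt14 {T : ℕ} (hT : 3 ≤ T) (q0 q1 : ℕ)
    (h0 : q0 + 1 ≤ T - 1) (h1 : q1 + 1 ≤ T - 1) (hne : q0 ≠ q1)
    (ω₁ ω₂ ω₃ ω₄ : Fin T → Fin 2)
    (hω₁ : ω₁ ⟨q0, by omega⟩ = 0 ∧ ω₁ ⟨q0 + 1, by omega⟩ = 0)
    (hω₂ : ω₂ ⟨q0, by omega⟩ = 1 ∧ ω₂ ⟨q0 + 1, by omega⟩ = 1)
    (hω₃ : ω₃ ⟨q1, by omega⟩ = 0 ∧ ω₃ ⟨q1 + 1, by omega⟩ = 1)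
    (hω₄ : ω₄ ⟨q1, by omega⟩ = 1 ∧ ω₄ ⟨q1 + 1, by omega⟩ = 0)
    (τ₁ τ₂ τ₃ τ₄ : Fin T → Fin 2)
    (hτ₁ : ∀ m : Fin T, τ₁ m =
      if (m : ℕ) ≤ q0 then ω₁ m else if (m : ℕ) = q0 + 1 then 1 else ω₂ m)
    (hτ₂ : ∀ m : Fin T, τ₂ m =
      if (m : ℕ) ≤ q0 then ω₂ m else if (m : ℕ) = q0 + 1 then 0 else ω₁ m)
    (hτ₃ : ∀ m : Fin T, τ₃ m =
      if (m : ℕ) ≤ q1 then ω₃ m else if (m : ℕ) = q1 + 1 then 0 else ω₄ m)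
    (hτ₄ : ∀ m : Fin T, τ₄ m =
      if (m : ℕ) ≤ q1 then ω₄ m else if (m : ℕ) = q1 + 1 then 1 else ω₃ m) :
    (∀ i j : Fin 2,
      transCount τ₁ i j + transCount τ₂ i j + transCount τ₃ i j + transCount τ₄ i j =
      transCount ω₁ i j + transCount ω₂ i j + transCount ω₃ i j + transCount ω₄ i j) ∧
    ({τ₁ ⟨0, by omega⟩, τ₂ ⟨0, by omega⟩, τ₃ ⟨0, by omega⟩, τ₄ ⟨0, by omega⟩} :
        Multiset (Fin 2)) =
      {ω₁ ⟨0, by omega⟩, ω₂ ⟨0, by omega⟩, ω₃ ⟨0, by omega⟩, ω₄ ⟨0, by omega⟩} ∧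
    ({τ₁ ⟨T - 1, by omega⟩, τ₂ ⟨T - 1, by omega⟩, τ₃ ⟨T - 1, by omega⟩,
        τ₄ ⟨T - 1, by omega⟩} : Multiset (Fin 2)) =
      {ω₁ ⟨T - 1, by omega⟩, ω₂ ⟨T - 1, by omega⟩, ω₃ ⟨T - 1, by omega⟩,
        ω₄ ⟨T - 1, by omega⟩} := by
  -- small arithmetic proofs (avoid giant omega terms in Fin.mk proofs)
  have hTpos : 0 < T := Nat.lt_of_lt_of_le (Nat.zero_lt_succ 2) hT
  have hT1 : T - 1 < T := Nat.sub_lt hTpos Nat.one_pos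
  have hq0T : q0 + 1 < T := Nat.lt_of_le_of_lt h0 hT1
  have hq1T : q1 + 1 < T := Nat.lt_of_le_of_lt h1 hT1
  have hq0T' : q0 < T := Nat.lt_of_succ_lt hq0T
  have hq1T' : q1 < T := Nat.lt_of_succ_lt hq1T
  have hq0 : q0 < T - 1 := Nat.lt_of_succ_le h0
  have hq1 : q1 < T - 1 := Nat.lt_of_succ_le h1
  -- clean restatements of the hypotheses
  have Hω₁ : ω₁ ⟨q0, hq0T'⟩ = 0 ∧ ω₁ ⟨q0 + 1, hq0T⟩ = 0 := hω₁
  have Hω₂ : ω₂ ⟨q0, hq0T'⟩ = 1 ∧ ω₂ ⟨q0 + 1, hq0T⟩ = 1 := hω₂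
  have Hω₃ : ω₃ ⟨q1, hq1T'⟩ = 0 ∧ ω₃ ⟨q1 + 1, hq1T⟩ = 1 := hω₃
  have Hω₄ : ω₄ ⟨q1, hq1T'⟩ = 1 ∧ ω₄ ⟨q1 + 1, hq1T⟩ = 0 := hω₄
  clear hω₁ hω₂ hω₃ hω₄
  -- simplified descriptions of the swapped paths
  have hτ₁' : ∀ m : Fin T, τ₁ m = if (m : ℕ) ≤ q0 then ω₁ m else ω₂ m := by
    intro m
    rw [hτ₁ m]
    split_ifs with h h2
    · rfl
    · have hm : m = ⟨q0 + 1, hq0T⟩ := Fin.ext h2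
      rw [hm]; exact Hω₂.2.symm
    · rfl
  have hτ₂' : ∀ m : Fin T, τ₂ m = if (m : ℕ) ≤ q0 then ω₂ m else ω₁ m := by
    intro m
    rw [hτ₂ m]
    split_ifs with h h2
    · rfl
    · have hm : m = ⟨q0 + 1, hq0T⟩ := Fin.ext h2
      rw [hm]; exact Hω₁.2.symm
    · rfl
  have hτ₃' : ∀ m : Fin T, τ₃ m = if (m : ℕ) ≤ q1 then ω₃ m else ω₄ m := by
    intro m
    rw [hτ₃ m]
    split_ifs with h h2
    · rfl
    · have hm : m = ⟨q1 + 1, hq1T⟩ := Fin.ext h2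
      rw [hm]; exact Hω₄.2.symm
    · rfl
  have hτ₄' : ∀ m : Fin T, τ₄ m = if (m : ℕ) ≤ q1 then ω₄ m else ω₃ m := by
    intro m
    rw [hτ₄ m]
    split_ifs with h h2
    · rfl
    · have hm : m = ⟨q1 + 1, hq1T⟩ := Fin.ext h2
      rw [hm]; exact Hω₃.2.symm
    · rfl
  clear hτ₁ hτ₂ hτ₃ hτ₄
  refine ⟨?_, ?_, ?_⟩
  · -- transition counts
    intro i j
    have hsum : ∑ t : Fin (T - 1),
        (ind τ₁ i j t + ind τ₂ i j t + ind τ₃ i j t + ind τ₄ i j t)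
        = ∑ t : Fin (T - 1),
        (ind ω₁ i j t + ind ω₂ i j t + ind ω₃ i j t + ind ω₄ i j t) := by
      have hQne : (⟨q0, hq0⟩ : Fin (T - 1)) ≠ ⟨q1, hq1⟩ :=
        fun h => hne (congrArg Fin.val h)
      rw [← Finset.sum_compl_add_sum
        ({(⟨q0, hq0⟩ : Fin (T - 1)), ⟨q1, hq1⟩} : Finset (Fin (T - 1)))]
      rw [← Finset.sum_compl_add_sum
        ({(⟨q0, hq0⟩ : Fin (T - 1)), ⟨q1, hq1⟩} : Finset (Fin (T - 1)))]
      congr 1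
      · apply Finset.sum_congr rfl
        intro t ht
        simp only [Finset.mem_compl, Finset.mem_insert, Finset.mem_singleton, not_or] at ht
        have h0' : (t : ℕ) ≠ q0 := fun h => ht.1 (Fin.ext h)
        have h1' : (t : ℕ) ≠ q1 := fun h => ht.2 (Fin.ext h)
        have e12 := pair_ind q0 ω₁ ω₂ τ₁ τ₂ hτ₁' hτ₂' i j t h0'
        have e34 := pair_ind q1 ω₃ ω₄ τ₃ τ₄ hτ₃' hτ₄' i j t h1'
        omega
      · rw [Finset.sum_pair hQne, Finset.sum_pair hQne]
        have A' : ind τ₁ i j ⟨q0, hq0⟩ = ind ω₃ i j ⟨q1, hq1⟩ := by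
          rw [ind_at q0 h0 ω₁ ω₂ τ₁ hτ₁' i j]
          unfold ind
          rw [Hω₁.1, Hω₂.2, Hω₃.1, Hω₃.2]
        have B' : ind τ₂ i j ⟨q0, hq0⟩ = ind ω₄ i j ⟨q1, hq1⟩ := by
          rw [ind_at q0 h0 ω₂ ω₁ τ₂ hτ₂' i j]
          unfold ind
          rw [Hω₂.1, Hω₁.2, Hω₄.1, Hω₄.2]
        have C' : ind τ₃ i j ⟨q1, hq1⟩ = ind ω₁ i j ⟨q0, hq0⟩ := by
          rw [ind_at q1 h1 ω₃ ω₄ τ₃ hτ₃' i j]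
          unfold ind
          rw [Hω₃.1, Hω₄.2, Hω₁.1, Hω₁.2]
        have D' : ind τ₄ i j ⟨q1, hq1⟩ = ind ω₂ i j ⟨q0, hq0⟩ := by
          rw [ind_at q1 h1 ω₄ ω₃ τ₄ hτ₄' i j]
          unfold ind
          rw [Hω₄.1, Hω₃.2, Hω₂.1, Hω₂.2]
        have P34 : ind τ₃ i j ⟨q0, hq0⟩ + ind τ₄ i j ⟨q0, hq0⟩
            = ind ω₃ i j ⟨q0, hq0⟩ + ind ω₄ i j ⟨q0, hq0⟩ :=
          pair_ind q1 ω₃ ω₄ τ₃ τ₄ hτ₃' hτ₄' i j ⟨q0, hq0⟩ hne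
        have P12 : ind τ₁ i j ⟨q1, hq1⟩ + ind τ₂ i j ⟨q1, hq1⟩
            = ind ω₁ i j ⟨q1, hq1⟩ + ind ω₂ i j ⟨q1, hq1⟩ :=
          pair_ind q0 ω₁ ω₂ τ₁ τ₂ hτ₁' hτ₂' i j ⟨q1, hq1⟩ (Ne.symm hne)
        omega
    rw [transCount_eq_sum, transCount_eq_sum, transCount_eq_sum, transCount_eq_sum,
      transCount_eq_sum, transCount_eq_sum, transCount_eq_sum, transCount_eq_sum]
    simpa only [Finset.sum_add_distrib] using hsum
  · -- initial states
    show ({τ₁ ⟨0, hTpos⟩, τ₂ ⟨0, hTpos⟩, τ₃ ⟨0, hTpos⟩, τ₄ ⟨0, hTpos⟩} : Multiset (Fin 2))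
        = {ω₁ ⟨0, hTpos⟩, ω₂ ⟨0, hTpos⟩, ω₃ ⟨0, hTpos⟩, ω₄ ⟨0, hTpos⟩}
    have e1 : τ₁ ⟨0, hTpos⟩ = ω₁ ⟨0, hTpos⟩ :=
      (hτ₁' ⟨0, hTpos⟩).trans (if_pos (Nat.zero_le q0))
    have e2 : τ₂ ⟨0, hTpos⟩ = ω₂ ⟨0, hTpos⟩ :=
      (hτ₂' ⟨0, hTpos⟩).trans (if_pos (Nat.zero_le q0))
    have e3 : τ₃ ⟨0, hTpos⟩ = ω₃ ⟨0, hTpos⟩ :=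
      (hτ₃' ⟨0, hTpos⟩).trans (if_pos (Nat.zero_le q1))
    have e4 : τ₄ ⟨0, hTpos⟩ = ω₄ ⟨0, hTpos⟩ :=
      (hτ₄' ⟨0, hTpos⟩).trans (if_pos (Nat.zero_le q1))
    rw [e1, e2, e3, e4]
  · -- final states
    show ({τ₁ ⟨T - 1, hT1⟩, τ₂ ⟨T - 1, hT1⟩, τ₃ ⟨T - 1, hT1⟩, τ₄ ⟨T - 1, hT1⟩} :
          Multiset (Fin 2))
        = {ω₁ ⟨T - 1, hT1⟩, ω₂ ⟨T - 1, hT1⟩, ω₃ ⟨T - 1, hT1⟩, ω₄ ⟨T - 1, hT1⟩}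
    have e1 : τ₁ ⟨T - 1, hT1⟩ = ω₂ ⟨T - 1, hT1⟩ :=
      (hτ₁' ⟨T - 1, hT1⟩).trans (if_neg (show ¬ T - 1 ≤ q0 by omega))
    have e2 : τ₂ ⟨T - 1, hT1⟩ = ω₁ ⟨T - 1, hT1⟩ :=
      (hτ₂' ⟨T - 1, hT1⟩).trans (if_neg (show ¬ T - 1 ≤ q0 by omega))
    have e3 : τ₃ ⟨T - 1, hT1⟩ = ω₄ ⟨T - 1, hT1⟩ :=
      (hτ₃' ⟨T - 1, hT1⟩).trans (if_neg (show ¬ T - 1 ≤ q1 by omega))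
    have e4 : τ₄ ⟨T - 1, hT1⟩ = ω₃ ⟨T - 1, hT1⟩ :=
      (hτ₄' ⟨T - 1, hT1⟩).trans (if_neg (show ¬ T - 1 ≤ q1 by omega))
    rw [e1, e2, e3, e4]
    refine (Multiset.cons_swap _ _ _).trans ?_
    exact congrArg _ (congrArg _ (Multiset.cons_swap _ _ _))
end

section
/- The degree-two swap of equation (iv) preserves transition counts: for T ≥ 4, let ω_1 be a path over {1,2} with (ω_1)_{t_0} = (ω_1)_{t_0+1} = 1, (ω_1)_{t_0+2} = 2, and ω_2 a path with (ω_2)_{t_1} = 1, (ω_2)_{t_1+1} = (ω_2)_{t_1+2} = 2 (1 ≤ t_0, t_1 ≤ T−2). Define ω̃_1 by replacing positions t_0, t_0+1, t_0+2 of ω_1 with 1,2,2, and ω̃_2 by replacing positions t_1, t_1+1, t_1+2 of ω_2 with 1,1,2. Then the multiset {ω̃_1, ω̃_2} has the same total number of i→j transitions as {ω_1, ω_2} for every (i,j), and the same initial and final states. -/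
section

variable {S : Type} {T : ℕ}

lemma eq_of_ne_of_eq_ite {p : ℕ} (hp : p + 2 < T) {ω τ : Fin T → S} {a b c : S}
    (hτ : ∀ m : Fin T, τ m = if (m : ℕ) = p then a else if (m : ℕ) = p + 1 then b
      else if (m : ℕ) = p + 2 then c else ω m)
    (ha : ω ⟨p, by omega⟩ = a) (hc : ω ⟨p + 2, hp⟩ = c) (m : Fin T) (hm : (m : ℕ) ≠ p + 1) :
    τ m = ω m := by
  rw [hτ, if_neg hm]
  split_ifs with h_p h_p2
  · rw [← ha]; exact congrArg ω (Fin.ext h_p).symm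
  · rw [← hc]; exact congrArg ω (Fin.ext h_p2).symm
  · rfl

variable [DecidableEq S]

def tripleTransCount (a b c i j : S) : ℕ :=
  (if a = i ∧ b = j then 1 else 0) + (if b = i ∧ c = j then 1 else 0)

lemma transCount_eq_sum_s15 (ω : Fin T → S) (i j : S) :
    transCount ω i j = ∑ t : Fin (T - 1),
      if ω ⟨t.1, by have := t.2; omega⟩ = i ∧ ω ⟨t.1 + 1, by have := t.2; omega⟩ = j
      then 1 else 0 :=
  Finset.card_filter _ _

lemma transCount_add_tripleTransCount_of_eq_of_ne {p : ℕ} (hp : p + 2 < T) {ω τ : Fin T → S}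
    (hωτ : ∀ m : Fin T, (m : ℕ) ≠ p + 1 → τ m = ω m) (i j : S) :
    transCount τ i j + tripleTransCount (ω ⟨p, by omega⟩) (ω ⟨p + 1, by omega⟩)
        (ω ⟨p + 2, hp⟩) i j =
      transCount ω i j + tripleTransCount (τ ⟨p, by omega⟩) (τ ⟨p + 1, by omega⟩)
        (τ ⟨p + 2, hp⟩) i j := by
  set f : (Fin T → S) → Fin (T - 1) → ℕ := fun σ t =>
    if σ ⟨t.1, by have := t.2; omega⟩ = i ∧ σ ⟨t.1 + 1, by have := t.2; omega⟩ = j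
    then 1 else 0
  have h_ne : (⟨p, by omega⟩ : Fin (T - 1)) ≠ ⟨p + 1, by omega⟩ := by simp
  set s : Finset (Fin (T - 1)) := {⟨p, by omega⟩, ⟨p + 1, by omega⟩}
  have h_triple : ∀ σ : Fin T → S, tripleTransCount (σ ⟨p, by omega⟩)
      (σ ⟨p + 1, by omega⟩) (σ ⟨p + 2, hp⟩) i j = ∑ t ∈ s, f σ t := fun σ =>
    (Finset.sum_pair (f := f σ) h_ne).symm
  have h_off : ∑ t ∈ sᶜ, f τ t = ∑ t ∈ sᶜ, f ω t := by
    refine Finset.sum_congr rfl fun t ht => ?_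
    have ht' : (t : ℕ) ≠ p ∧ (t : ℕ) ≠ p + 1 := by
      simpa [s, Fin.ext_iff, not_or] using ht
    have := t.2
    simp only [f, hωτ ⟨t, by omega⟩ ht'.2, hωτ ⟨t + 1, by omega⟩ (by simp; omega)]
  rw [transCount_eq_sum_s15, transCount_eq_sum_s15, h_triple, h_triple,
    ← Finset.sum_add_sum_compl s (f τ), ← Finset.sum_add_sum_compl s (f ω), h_off]
  ring

lemma transCount_add_tripleTransCount_of_eq_ite {p : ℕ} (hp : p + 2 < T) {ω τ : Fin T → S}
    {a b c : S}
    (hτ : ∀ m : Fin T, τ m = if (m : ℕ) = p then a else if (m : ℕ) = p + 1 then b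
      else if (m : ℕ) = p + 2 then c else ω m)
    (ha : ω ⟨p, by omega⟩ = a) (hc : ω ⟨p + 2, hp⟩ = c) (i j : S) :
    transCount τ i j + tripleTransCount a (ω ⟨p + 1, by omega⟩) c i j =
      transCount ω i j + tripleTransCount a b c i j := by
  have h := transCount_add_tripleTransCount_of_eq_of_ne hp (eq_of_ne_of_eq_ite hp hτ ha hc) i j
  simpa [ha, hc, hτ] using h

end

/-- State `0` is the paper's `1`, state `1` is the paper's `2`; `q₀ = t₀ - 1`, `q₁ = t₁ - 1`
are 0-indexed positions. -/
theorem stmt15 {T : ℕ} (q0 q1 : ℕ)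
    (h0 : q0 + 2 ≤ T - 1) (h1 : q1 + 2 ≤ T - 1)
    (ω₁ ω₂ : Fin T → Fin 2)
    (hω₁ : ω₁ ⟨q0, by omega⟩ = 0 ∧ ω₁ ⟨q0 + 1, by omega⟩ = 0 ∧
           ω₁ ⟨q0 + 2, by omega⟩ = 1)
    (hω₂ : ω₂ ⟨q1, by omega⟩ = 0 ∧ ω₂ ⟨q1 + 1, by omega⟩ = 1 ∧
           ω₂ ⟨q1 + 2, by omega⟩ = 1)
    (τ₁ τ₂ : Fin T → Fin 2)
    (hτ₁ : ∀ m : Fin T, τ₁ m =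
      if (m : ℕ) = q0 then 0 else if (m : ℕ) = q0 + 1 then 1
      else if (m : ℕ) = q0 + 2 then 1 else ω₁ m)
    (hτ₂ : ∀ m : Fin T, τ₂ m =
      if (m : ℕ) = q1 then 0 else if (m : ℕ) = q1 + 1 then 0
      else if (m : ℕ) = q1 + 2 then 1 else ω₂ m) :
    (∀ i j : Fin 2,
      transCount τ₁ i j + transCount τ₂ i j = transCount ω₁ i j + transCount ω₂ i j) ∧
    τ₁ ⟨0, by omega⟩ = ω₁ ⟨0, by omega⟩ ∧ τ₂ ⟨0, by omega⟩ = ω₂ ⟨0, by omega⟩ ∧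
    τ₁ ⟨T - 1, by omega⟩ = ω₁ ⟨T - 1, by omega⟩ ∧
    τ₂ ⟨T - 1, by omega⟩ = ω₂ ⟨T - 1, by omega⟩ := by
  obtain ⟨hω₁_left, hω₁_mid, hω₁_right⟩ := hω₁
  obtain ⟨hω₂_left, hω₂_mid, hω₂_right⟩ := hω₂
  have hq0 : q0 + 2 < T := by omega
  have hq1 : q1 + 2 < T := by omega
  have e₁ := eq_of_ne_of_eq_ite hq0 hτ₁ hω₁_left hω₁_right
  have e₂ := eq_of_ne_of_eq_ite hq1 hτ₂ hω₂_left hω₂_right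
  refine ⟨fun i j => ?_, e₁ _ (by simp), e₂ _ (by simp), e₁ _ (by simp; omega),
    e₂ _ (by simp; omega)⟩
  have k₁ := transCount_add_tripleTransCount_of_eq_ite hq0 hτ₁ hω₁_left hω₁_right i j
  have k₂ := transCount_add_tripleTransCount_of_eq_ite hq1 hτ₂ hω₂_left hω₂_right i j
  rw [hω₁_mid] at k₁
  rw [hω₂_mid] at k₂
  omega
end
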